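/- arXiv:2004.00714 — 3 statements merged into one kernel-verified Lean document; each statement's English description precedes it below -/
import Mathlib

section
/- Let X and Y be independent centered Gaussian random vectors in ℝⁿ with covariance matrices C^X and C^Y respectively. Let f: ℝⁿ → ℝ be a C² function such that f and all its first and second partial derivatives are bounded in absolute value by e^{λ(1+|x|)} for some constant λ ≥ 0. Then E[f(Y)] − E[f(X)] = (1/2) ∫₀¹ E[ Tr( (C^Y − C^X) · ∇²f(√t X + √(1−t) Y) ) ] dt, where ∇²f denotes the Hessian matrix of f. -/
open MeasureTheory ProbabilityTheory

/-- The standard Gaussian measure on `ℝⁿ` (product of `n` standard Gaussians). -/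
noncomputable def stdGaussianPi (n : ℕ) : Measure (Fin n → ℝ) :=
  Measure.pi fun _ => gaussianReal 0 1

/-- A measure `μ` on `ℝⁿ` is the law of a centered Gaussian random vector with
covariance matrix `C` iff it is the pushforward of the standard Gaussian measure
under a linear map `A` with `A * A.transpose = C`. -/
def IsCenteredGaussian (n : ℕ) (μ : Measure (Fin n → ℝ))
    (C : Matrix (Fin n) (Fin n) ℝ) : Prop :=
  ∃ A : Matrix (Fin n) (Fin n) ℝ, C = A * A.transpose ∧ μ = (stdGaussianPi n).map A.mulVec

/-- The Hessian matrix `∇²f(x)` of a function `f : ℝⁿ → ℝ`. -/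
noncomputable def hessianMatrix (n : ℕ) (f : (Fin n → ℝ) → ℝ) (x : Fin n → ℝ) :
    Matrix (Fin n) (Fin n) ℝ :=
  Matrix.of fun i j =>
    fderiv ℝ (fun y => fderiv ℝ f y (Pi.single j 1)) x (Pi.single i 1)


/-!
Realise `X` and `Y` independently on `μX.prod μY` and interpolate along
`Z_t = √t X + √(1 - t) Y`, so that `F t = E f(Z_t)` runs from `E f(Y)` at `t = 0` to `E f(X)` at
`t = 1`. For `0 < t < 1`, `F' t = E[Df(Z_t)(X / (2√t) - Y / (2√(1 - t)))]`, and Gaussian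
integration by parts `E[X_i g(X)] = ∑ₗ C^X_{il} E[∂ₗ g(X)]` (obtained from the one-dimensional
identity `∫ x g(x) dγ = ∫ g'(x) dγ` through `X = A G` and Fubini), applied in each factor, turns
this into `-½ E[Tr((C^Y - C^X) ∇²f(Z_t))]`. The growth bound makes every integrand dominated by
some `a e^{b‖p‖}`, which is integrable under Gaussian measures; this justifies differentiating
under the integral sign and the continuity needed for the fundamental theorem of calculus.
-/

open Real Filter Topology
open scoped Matrix

instance (n : ℕ) : IsProbabilityMeasure (stdGaussianPi n) := by
  unfold stdGaussianPi; infer_instance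

lemma ContinuousLinearMap.apply_eq_sum_mul_apply_single {ι : Type*} [Fintype ι] [DecidableEq ι]
    (L : (ι → ℝ) →L[ℝ] ℝ) (x : ι → ℝ) : L x = ∑ i, x i * L (Pi.single i 1) := by
  conv_lhs => rw [← Finset.univ_sum_single x]
  rw [map_sum]
  refine Finset.sum_congr rfl fun i _ => ?_
  rw [← smul_eq_mul, ← map_smul]
  congr 1
  ext j
  simp [Pi.single_apply]

lemma Matrix.exists_norm_mulVec_le {m n : Type*} [Fintype m] [Fintype n]
    (A : Matrix m n ℝ) : ∃ K, 0 ≤ K ∧ ∀ x, ‖A *ᵥ x‖ ≤ K * ‖x‖ :=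
  let L := LinearMap.toContinuousLinearMap (Matrix.mulVecLin A)
  ⟨‖L‖, norm_nonneg _, L.le_opNorm⟩

lemma fderiv_comp_mulVec_apply_single {n : ℕ} {h : (Fin n → ℝ) → ℝ} (hh : Differentiable ℝ h)
    (A : Matrix (Fin n) (Fin n) ℝ) (u : Fin n → ℝ) (k : Fin n) :
    fderiv ℝ (fun u => h (A *ᵥ u)) u (Pi.single k 1) =
      ∑ l, A l k * fderiv ℝ h (A *ᵥ u) (Pi.single l 1) := by
  let L := LinearMap.toContinuousLinearMap (Matrix.mulVecLin A)
  have hd : HasFDerivAt (fun u => h (A *ᵥ u)) ((fderiv ℝ h (A *ᵥ u)).comp L) u :=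
    (hh _).hasFDerivAt.comp u L.hasFDerivAt
  rw [hd.fderiv, ContinuousLinearMap.comp_apply, ContinuousLinearMap.apply_eq_sum_mul_apply_single]
  simp [L]

lemma fderiv_comp_smul_add {E F : Type*} [NormedAddCommGroup E] [NormedSpace ℝ E]
    [NormedAddCommGroup F] [NormedSpace ℝ F] {g : E → F} (hg : Differentiable ℝ g)
    (a : ℝ) (w x : E) :
    fderiv ℝ (fun x => g (a • x + w)) x = a • fderiv ℝ g (a • x + w) := by
  have hd : HasFDerivAt (fun x => g (a • x + w))
      ((fderiv ℝ g (a • x + w)).comp (a • ContinuousLinearMap.id ℝ E)) x :=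
    (hg (a • x + w)).hasFDerivAt.comp x (((hasFDerivAt_id x).const_smul a).add_const w)
  rw [hd.fderiv]
  ext v
  simp

section ExpGrowth

variable {E F G : Type*} [NormedAddCommGroup E] [NormedAddCommGroup F] [NormedAddCommGroup G]

def ExpBounded (g : E → F) : Prop :=
  ∃ a b : ℝ, 0 ≤ a ∧ 0 ≤ b ∧ ∀ x, ‖g x‖ ≤ a * exp (b * ‖x‖)

lemma ExpBounded.of_norm_le {g : E → F} {g' : E → G} (hg : ExpBounded g) {c : ℝ}
    (h : ∀ x, ‖g' x‖ ≤ c * ‖g x‖) : ExpBounded g' := by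
  obtain ⟨a, b, ha, hb, hgb⟩ := hg
  refine ⟨max c 0 * a, b, mul_nonneg (le_max_right _ _) ha, hb, fun x => (h x).trans ?_⟩
  calc c * ‖g x‖ ≤ max c 0 * ‖g x‖ := mul_le_mul_of_nonneg_right (le_max_left _ _) (norm_nonneg _)
    _ ≤ max c 0 * (a * exp (b * ‖x‖)) := mul_le_mul_of_nonneg_left (hgb x) (le_max_right _ _)
    _ = max c 0 * a * exp (b * ‖x‖) := (mul_assoc _ _ _).symm

lemma ExpBounded.clm_apply [NormedSpace ℝ F] [NormedSpace ℝ G] {g : E → G →L[ℝ] F}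
    (hg : ExpBounded g) (v : G) : ExpBounded fun x => g x v :=
  hg.of_norm_le (c := ‖v‖) fun x => by rw [mul_comm]; exact (g x).le_opNorm v

lemma ExpBounded.mul {g h : E → ℝ} (hg : ExpBounded g) (hh : ExpBounded h) :
    ExpBounded (fun x => g x * h x) := by
  obtain ⟨a, b, ha, hb, hgb⟩ := hg
  obtain ⟨a', b', ha', hb', hhb⟩ := hh
  refine ⟨a * a', b + b', mul_nonneg ha ha', add_nonneg hb hb', fun x => ?_⟩
  calc ‖g x * h x‖ = ‖g x‖ * ‖h x‖ := norm_mul _ _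
    _ ≤ (a * exp (b * ‖x‖)) * (a' * exp (b' * ‖x‖)) :=
        mul_le_mul (hgb x) (hhb x) (norm_nonneg _) (by positivity)
    _ = a * a' * exp ((b + b') * ‖x‖) := by rw [add_mul, exp_add]; ring

lemma ExpBounded.add {g h : E → F} (hg : ExpBounded g) (hh : ExpBounded h) :
    ExpBounded (g + h) := by
  obtain ⟨a, b, ha, hb, hgb⟩ := hg
  obtain ⟨a', b', ha', hb', hhb⟩ := hh
  refine ⟨a + a', max b b', add_nonneg ha ha', le_max_of_le_left hb, fun x => ?_⟩
  calc ‖g x + h x‖ ≤ a * exp (b * ‖x‖) + a' * exp (b' * ‖x‖) :=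
        (norm_add_le _ _).trans (add_le_add (hgb x) (hhb x))
    _ ≤ a * exp (max b b' * ‖x‖) + a' * exp (max b b' * ‖x‖) := by
        gcongr
        · exact le_max_left _ _
        · exact le_max_right _ _
    _ = (a + a') * exp (max b b' * ‖x‖) := by ring

lemma ExpBounded.sum {ι : Type*} (s : Finset ι) {g : ι → E → F}
    (hg : ∀ i ∈ s, ExpBounded (g i)) : ExpBounded (fun x => ∑ i ∈ s, g i x) := by
  classical
  induction s using Finset.induction_on with
  | empty => exact ⟨0, 0, le_rfl, le_rfl, fun x => by simp⟩
  | insert i s hi ih =>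
    simp_rw [Finset.sum_insert hi]
    exact (hg i (s.mem_insert_self i)).add (ih fun j hj => hg j (Finset.mem_insert_of_mem hj))

lemma ExpBounded.comp_add {g : E → F} (hg : ExpBounded g) (L : G → E) (w : E) {K : ℝ}
    (hK : 0 ≤ K) (hL : ∀ y, ‖L y‖ ≤ K * ‖y‖) : ExpBounded (fun y => g (L y + w)) := by
  obtain ⟨a, b, ha, hb, hgb⟩ := hg
  refine ⟨a * exp (b * ‖w‖), b * K, by positivity, mul_nonneg hb hK, fun y => (hgb _).trans ?_⟩
  rw [mul_assoc, ← exp_add]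
  gcongr
  calc b * ‖L y + w‖ ≤ b * (K * ‖y‖ + ‖w‖) :=
        mul_le_mul_of_nonneg_left ((norm_add_le _ _).trans (by gcongr; exact hL y)) hb
    _ = b * ‖w‖ + b * K * ‖y‖ := by ring

lemma ExpBounded.comp {g : E → F} (hg : ExpBounded g) (L : G → E) {K : ℝ} (hK : 0 ≤ K)
    (hL : ∀ y, ‖L y‖ ≤ K * ‖y‖) : ExpBounded (fun y => g (L y)) := by
  simpa using hg.comp_add L 0 hK hL

lemma expBounded_norm_le {g : E → F} {C : ℝ} (h : ∀ x, ‖g x‖ ≤ C * ‖x‖) : ExpBounded g :=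
  ⟨max C 0, 1, le_max_right _ _, zero_le_one, fun x => (h x).trans <| by
    have := (le_add_of_nonneg_right zero_le_one).trans (add_one_le_exp ‖x‖)
    rw [one_mul]
    exact mul_le_mul (le_max_left _ _) (by linarith) (norm_nonneg _) (le_max_right _ _)⟩

lemma expBounded_apply {ι : Type*} [Fintype ι] (k : ι) : ExpBounded (fun u : ι → ℝ => u k) :=
  expBounded_norm_le (C := 1) fun u => by rw [one_mul]; exact norm_le_pi_norm u k

lemma expBounded_exp_mul_norm (b : ℝ) : ExpBounded (fun x : E => exp (b * ‖x‖)) :=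
  ⟨1, |b|, zero_le_one, abs_nonneg b, fun x => by
    rw [norm_of_nonneg (exp_pos _).le, one_mul]
    exact exp_le_exp.2 (mul_le_mul_of_nonneg_right (le_abs_self b) (norm_nonneg _))⟩

lemma expBounded_fderiv_of_apply_single {ι : Type*} [Fintype ι] [DecidableEq ι]
    {h : (ι → ℝ) → ℝ} (hh : ∀ i, ExpBounded (fun x => fderiv ℝ h x (Pi.single i 1))) :
    ExpBounded (fderiv ℝ h) := by
  refine (ExpBounded.sum Finset.univ fun i _ => (hh i).of_norm_le (c := 1)
    (g' := fun x => ‖fderiv ℝ h x (Pi.single i 1)‖) fun x => by simp).of_norm_le (c := 1)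
    fun x => ?_
  rw [one_mul, Real.norm_of_nonneg (Finset.sum_nonneg fun i _ => norm_nonneg _)]
  refine (fderiv ℝ h x).opNorm_le_bound (Finset.sum_nonneg fun i _ => norm_nonneg _) fun v => ?_
  rw [ContinuousLinearMap.apply_eq_sum_mul_apply_single, Finset.sum_mul]
  refine (norm_sum_le _ _).trans (Finset.sum_le_sum fun i _ => ?_)
  rw [norm_mul, mul_comm]
  exact mul_le_mul_of_nonneg_left (norm_le_pi_norm v i) (norm_nonneg _)

end ExpGrowth

section ExpMoments

variable {E : Type*} [NormedAddCommGroup E] [MeasurableSpace E]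

def HasExpMoments (μ : Measure E) : Prop :=
  ∀ b : ℝ, Integrable (fun x => exp (b * ‖x‖)) μ

lemma HasExpMoments.integrable {F : Type*} [NormedAddCommGroup F] {μ : Measure E}
    (hμ : HasExpMoments μ) {g : E → F} (hg : ExpBounded g) (hm : AEStronglyMeasurable g μ) :
    Integrable g μ := by
  obtain ⟨a, b, -, -, hgb⟩ := hg
  exact ((hμ b).const_mul a).mono' hm (ae_of_all _ hgb)

lemma hasExpMoments_gaussianReal (m : ℝ) (v : NNReal) : HasExpMoments (gaussianReal m v) := by
  intro b
  refine ((integrable_exp_mul_gaussianReal b).add (integrable_exp_mul_gaussianReal (-b))).mono'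
    (by fun_prop) (ae_of_all _ fun x => ?_)
  rw [norm_of_nonneg (exp_pos _).le, Real.norm_eq_abs, Pi.add_apply]
  rcases abs_choice x with h | h <;> rw [h]
  · exact le_add_of_nonneg_right (exp_pos _).le
  · rw [mul_neg, ← neg_mul]
    exact le_add_of_nonneg_left (exp_pos _).le

lemma HasExpMoments.pi {ι : Type*} [Fintype ι] {μ : ι → Measure ℝ} [∀ i, SigmaFinite (μ i)]
    (hμ : ∀ i, HasExpMoments (μ i)) : HasExpMoments (Measure.pi μ) := by
  intro b
  refine (Integrable.fintype_prod (f := fun _ y => exp (|b| * ‖y‖)) fun i => hμ i |b|).mono'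
    (by fun_prop) (ae_of_all _ fun x => ?_)
  rw [norm_of_nonneg (exp_pos _).le, ← exp_sum, ← Finset.mul_sum]
  refine exp_le_exp.2 ?_
  calc b * ‖x‖ ≤ |b| * ‖x‖ := mul_le_mul_of_nonneg_right (le_abs_self b) (norm_nonneg _)
    _ ≤ |b| * ∑ i, ‖x i‖ := by
        gcongr
        exact pi_norm_le_iff_of_nonneg (by positivity) |>.2 fun i =>
          Finset.single_le_sum (f := fun i => ‖x i‖) (fun _ _ => norm_nonneg _) (Finset.mem_univ i)

lemma hasExpMoments_stdGaussianPi (n : ℕ) : HasExpMoments (stdGaussianPi n) :=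
  HasExpMoments.pi fun _ => hasExpMoments_gaussianReal 0 1

variable [BorelSpace E] [SecondCountableTopology E]

lemma HasExpMoments.prod {F : Type*} [NormedAddCommGroup F] [MeasurableSpace F] [BorelSpace F]
    [SecondCountableTopology F] {μ : Measure E} {ν : Measure F} [SFinite ν]
    (hμ : HasExpMoments μ) (hν : HasExpMoments ν) : HasExpMoments (μ.prod ν) := by
  intro b
  refine ((hμ |b|).mul_prod (hν |b|)).mono' (by fun_prop) (ae_of_all _ fun p => ?_)
  rw [norm_of_nonneg (exp_pos _).le, ← exp_add, ← mul_add]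
  refine exp_le_exp.2 ?_
  calc b * ‖p‖ ≤ |b| * ‖p‖ := mul_le_mul_of_nonneg_right (le_abs_self b) (norm_nonneg _)
    _ ≤ |b| * (‖p.1‖ + ‖p.2‖) := by
        gcongr
        rw [Prod.norm_def]
        exact max_le_add_of_nonneg (norm_nonneg _) (norm_nonneg _)

lemma HasExpMoments.map {F : Type*} [NormedAddCommGroup F] [MeasurableSpace F] [BorelSpace F]
    {μ : Measure E} (hμ : HasExpMoments μ) {L : E → F} (hL : Continuous L) {K : ℝ} (hK : 0 ≤ K)
    (hLK : ∀ x, ‖L x‖ ≤ K * ‖x‖) : HasExpMoments (μ.map L) := by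
  intro b
  rw [integrable_map_measure (by fun_prop) hL.aemeasurable]
  exact hμ.integrable ((expBounded_exp_mul_norm b).comp L hK hLK) (by fun_prop)

end ExpMoments

section Stein

lemma hasDerivAt_gaussianPDFReal_zero_one (x : ℝ) :
    HasDerivAt (gaussianPDFReal 0 1) (-x * gaussianPDFReal 0 1 x) x := by
  have hφ : gaussianPDFReal 0 1 = fun y => (√(2 * π))⁻¹ * exp (-y ^ 2 / 2) := by
    ext y; simp [gaussianPDFReal_def]
  have hexponent : HasDerivAt (fun y : ℝ => -y ^ 2 / 2) (-x) x := by
    simpa using ((hasDerivAt_pow 2 x).neg.div_const 2).congr_deriv (by ring : _ = -x)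
  rw [hφ]
  exact (hexponent.exp.const_mul _).congr_deriv (by ring)

lemma integrable_gaussianReal_iff {h : ℝ → ℝ} :
    Integrable h (gaussianReal 0 1) ↔ Integrable (fun x => gaussianPDFReal 0 1 x * h x) := by
  rw [gaussianReal_of_var_ne_zero 0 one_ne_zero, integrable_withDensity_iff_integrable_smul'
    (measurable_gaussianPDF 0 1) (ae_of_all _ fun _ => gaussianPDF_lt_top)]
  simp [toReal_gaussianPDF, smul_eq_mul]

theorem integral_mul_eq_integral_deriv_gaussianReal {g g' : ℝ → ℝ}
    (hg : ∀ x, HasDerivAt g (g' x) x) (hxg : Integrable (fun x => x * g x) (gaussianReal 0 1))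
    (hg' : Integrable g' (gaussianReal 0 1)) (hgi : Integrable g (gaussianReal 0 1)) :
    ∫ x, x * g x ∂gaussianReal 0 1 = ∫ x, g' x ∂gaussianReal 0 1 := by
  rw [integrable_gaussianReal_iff] at hxg hg' hgi
  have ibp := integral_mul_deriv_eq_deriv_mul_of_integrable (u := g) (u' := g')
    (v := gaussianPDFReal 0 1) (v' := fun x => -x * gaussianPDFReal 0 1 x)
    (fun x _ => hg x) (fun x _ => hasDerivAt_gaussianPDFReal_zero_one x)
    (by simpa [Pi.mul_def, mul_comm, mul_left_comm, mul_assoc] using hxg.neg)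
    (by simpa [Pi.mul_def, mul_comm] using hg') (by simpa [Pi.mul_def, mul_comm] using hgi)
  simp only [integral_gaussianReal_eq_integral_smul one_ne_zero, smul_eq_mul]
  calc ∫ x, gaussianPDFReal 0 1 x * (x * g x) = -∫ x, g x * (-x * gaussianPDFReal 0 1 x) := by
        rw [← integral_neg]; congr 1; ext x; ring
    _ = ∫ x, gaussianPDFReal 0 1 x * g' x := by
        rw [ibp, neg_neg]; congr 1; ext x; ring

lemma hasDerivAt_insertNth {m : ℕ} (k : Fin (m + 1)) (r : Fin m → ℝ) (x : ℝ) :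
    HasDerivAt (fun y : ℝ => k.insertNth (α := fun _ => ℝ) y r) (Pi.single k 1) x := by
  have hsplit : (fun y : ℝ => k.insertNth (α := fun _ => ℝ) y r) =
      fun y => y • Pi.single k 1 + k.insertNth (α := fun _ => ℝ) 0 r := by
    ext y j
    refine Fin.succAboveCases k ?_ (fun j => ?_) j <;> simp [Fin.succAbove_ne]
  rw [hsplit]
  simpa using ((hasDerivAt_id x).smul_const (Pi.single k (1 : ℝ) : Fin (m + 1) → ℝ)).add_const
    (k.insertNth (α := fun _ => ℝ) 0 r)

theorem integral_mul_eq_integral_fderiv_stdGaussianPi {n : ℕ} {h : (Fin n → ℝ) → ℝ}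
    (hh : Differentiable ℝ h) (k : Fin n)
    (hxh : Integrable (fun u => u k * h u) (stdGaussianPi n))
    (hh' : Integrable (fun u => fderiv ℝ h u (Pi.single k 1)) (stdGaussianPi n))
    (hhi : Integrable h (stdGaussianPi n)) :
    ∫ u, u k * h u ∂stdGaussianPi n = ∫ u, fderiv ℝ h u (Pi.single k 1) ∂stdGaussianPi n := by
  cases n with
  | zero => exact k.elim0
  | succ m =>
  let e := MeasurableEquiv.piFinSuccAbove (fun _ : Fin (m + 1) => ℝ) k
  have hmp : MeasurePreserving e.symm ((gaussianReal 0 1).prod (stdGaussianPi m))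
      (stdGaussianPi (m + 1)) :=
    (measurePreserving_piFinSuccAbove (fun _ => gaussianReal 0 1) k).symm
  have he : ∀ p : ℝ × (Fin m → ℝ), e.symm p = k.insertNth p.1 p.2 := fun p => rfl
  rw [← hmp.integrable_comp_emb e.symm.measurableEmbedding] at hxh hh' hhi
  simp only [Function.comp_def] at hxh hh' hhi
  rw [← hmp.integral_comp', ← hmp.integral_comp', integral_prod_symm _ hxh,
    integral_prod_symm _ hh']
  refine integral_congr_ae ?_
  filter_upwards [hxh.prod_left_ae, hh'.prod_left_ae, hhi.prod_left_ae] with r h1 h2 h3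
  simp only [he, Fin.insertNth_apply_same] at h1 h2 h3 ⊢
  exact integral_mul_eq_integral_deriv_gaussianReal
    (fun x => (hh _).hasFDerivAt.comp_hasDerivAt x (hasDerivAt_insertNth k r x)) h1 h2 h3

end Stein

namespace IsCenteredGaussian

variable {n : ℕ} {μ : Measure (Fin n → ℝ)} {C : Matrix (Fin n) (Fin n) ℝ}

lemma isProbabilityMeasure (hμ : IsCenteredGaussian n μ C) : IsProbabilityMeasure μ := by
  obtain ⟨A, -, rfl⟩ := hμ
  exact Measure.isProbabilityMeasure_map (by fun_prop)

lemma hasExpMoments (hμ : IsCenteredGaussian n μ C) : HasExpMoments μ := by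
  obtain ⟨A, -, rfl⟩ := hμ
  obtain ⟨K, hK, hAK⟩ := A.exists_norm_mulVec_le
  exact (hasExpMoments_stdGaussianPi n).map (by fun_prop) hK hAK

theorem integral_mul_eq_sum (hμ : IsCenteredGaussian n μ C) {h : (Fin n → ℝ) → ℝ}
    (hh : Differentiable ℝ h) (hb : ExpBounded h) (hb' : ExpBounded (fderiv ℝ h)) (i : Fin n) :
    ∫ x, x i * h x ∂μ = ∑ l, C i l * ∫ x, fderiv ℝ h x (Pi.single l 1) ∂μ := by
  obtain ⟨A, rfl, rfl⟩ := hμ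
  obtain ⟨K, hK, hAK⟩ := A.exists_norm_mulVec_le
  let L := LinearMap.toContinuousLinearMap (Matrix.mulVecLin A)
  have hA : Continuous (A *ᵥ ·) := L.continuous
  have hhc := hh.continuous
  have hγ := hasExpMoments_stdGaussianPi n
  set I : Fin n → ℝ := fun l => ∫ u, fderiv ℝ h (A *ᵥ u) (Pi.single l 1) ∂stdGaussianPi n
  have hchain := fderiv_comp_mulVec_apply_single hh A
  have hpartial : ∀ l, Integrable (fun u => fderiv ℝ h (A *ᵥ u) (Pi.single l 1))
      (stdGaussianPi n) := fun l =>
    hγ.integrable ((hb'.comp _ hK hAK).clm_apply _)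
      ((measurable_fderiv_apply_const ℝ h _).comp_aemeasurable hA.aemeasurable).aestronglyMeasurable
  have hcoord : ∀ k, Integrable (fun u => u k * h (A *ᵥ u)) (stdGaussianPi n) := fun k =>
    hγ.integrable ((expBounded_apply k).mul (hb.comp _ hK hAK)) (by fun_prop)
  have hstein : ∀ k, ∫ u, u k * h (A *ᵥ u) ∂stdGaussianPi n = ∑ l, A l k * I l := by
    intro k
    rw [integral_mul_eq_integral_fderiv_stdGaussianPi (h := fun u => h (A *ᵥ u))
      (hh.comp L.differentiable) k (hcoord k)
      (by simp_rw [hchain]; exact integrable_finsetSum _ fun l _ => (hpartial l).const_mul _)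
      (hγ.integrable (hb.comp _ hK hAK) (by fun_prop))]
    simp_rw [hchain]
    rw [integral_finsetSum _ fun l _ => (hpartial l).const_mul _]
    simp_rw [integral_const_mul, I]
  rw [integral_map hA.aemeasurable (by fun_prop)]
  calc ∫ u, (A *ᵥ u) i * h (A *ᵥ u) ∂stdGaussianPi n
      = ∑ k, A i k * ∫ u, u k * h (A *ᵥ u) ∂stdGaussianPi n := by
        simp_rw [Matrix.mulVec, dotProduct, Finset.sum_mul, mul_assoc]
        rw [integral_finsetSum _ fun k _ => (hcoord k).const_mul _]
        simp_rw [integral_const_mul]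
    _ = ∑ l, (A * A.transpose) i l * I l := by
        simp_rw [hstein, Matrix.mul_apply, Matrix.transpose_apply, Finset.mul_sum, Finset.sum_mul]
        rw [Finset.sum_comm]
        simp_rw [mul_assoc]
    _ = _ := by
        refine Finset.sum_congr rfl fun l _ => ?_
        rw [integral_map hA.aemeasurable
          (measurable_fderiv_apply_const ℝ h _).aestronglyMeasurable]

variable {ν : Measure (Fin n → ℝ)} [SFinite ν] {g : (Fin n → ℝ) → ℝ}

theorem integral_prod_fst_mul_eq_sum (hμ : IsCenteredGaussian n μ C) (hν : HasExpMoments ν)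
    (hg : Differentiable ℝ g) (hb : ExpBounded g) (hb' : ExpBounded (fderiv ℝ g))
    (a b : ℝ) (i : Fin n) :
    ∫ p, p.1 i * g (a • p.1 + b • p.2) ∂μ.prod ν =
      a * ∑ l, C i l * ∫ p, fderiv ℝ g (a • p.1 + b • p.2) (Pi.single l 1) ∂μ.prod ν := by
  have := hμ.isProbabilityMeasure
  have hμν := hμ.hasExpMoments.prod hν
  have hgc := hg.continuous
  have hpath : ∀ p : (Fin n → ℝ) × (Fin n → ℝ), ‖a • p.1 + b • p.2‖ ≤ (‖a‖ + ‖b‖) * ‖p‖ :=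
    fun p => (norm_add_le _ _).trans <| by
      rw [norm_smul, norm_smul, add_mul]
      gcongr
      exacts [norm_fst_le p, norm_snd_le p]
  have hslice : ∀ x : Fin n → ℝ, ‖a • x‖ ≤ ‖a‖ * ‖x‖ := fun x => (norm_smul a x).le
  have hpartial : ∀ l, Integrable (fun p : (Fin n → ℝ) × (Fin n → ℝ) =>
      fderiv ℝ g (a • p.1 + b • p.2) (Pi.single l 1)) (μ.prod ν) := fun l =>
    hμν.integrable ((hb'.comp _ (by positivity) hpath).clm_apply _)
      ((measurable_fderiv_apply_const ℝ g _).comp_aemeasurable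
        (by fun_prop)).aestronglyMeasurable
  have hcoord : ExpBounded (fun p : (Fin n → ℝ) × (Fin n → ℝ) => p.1 i) :=
    (expBounded_apply i).comp Prod.fst zero_le_one fun p => (one_mul ‖p‖).symm ▸ norm_fst_le p
  rw [integral_prod_symm _ (hμν.integrable (hcoord.mul (hb.comp _ (by positivity) hpath))
    (by fun_prop))]
  calc ∫ y, ∫ x, x i * g (a • x + b • y) ∂μ ∂ν
      = ∫ y, a * ∑ l, C i l * ∫ x, fderiv ℝ g (a • x + b • y) (Pi.single l 1) ∂μ ∂ν := by
        refine integral_congr_ae (ae_of_all _ fun y => ?_)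
        dsimp only
        have hcomp : Differentiable ℝ (fun x => g (a • x + b • y)) :=
          hg.comp ((differentiable_id.const_smul a).add_const _)
        rw [hμ.integral_mul_eq_sum hcomp (hb.comp_add _ _ (norm_nonneg a) hslice)
          ((hb'.comp_add _ _ (norm_nonneg a) hslice).of_norm_le fun x => by
            rw [fderiv_comp_smul_add hg, norm_smul])]
        simp_rw [fderiv_comp_smul_add hg, FunLike.coe_smul, Pi.smul_apply, smul_eq_mul,
          integral_const_mul, Finset.mul_sum]
        exact Finset.sum_congr rfl fun l _ => by ring
    _ = a * ∑ l, C i l * ∫ p, fderiv ℝ g (a • p.1 + b • p.2) (Pi.single l 1) ∂μ.prod ν := by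
        rw [integral_const_mul, integral_finsetSum _ fun l _ =>
          ((hpartial l).integral_prod_right).const_mul _]
        simp_rw [integral_const_mul, integral_prod_symm _ (hpartial _)]

theorem integral_prod_snd_mul_eq_sum (hμ : IsCenteredGaussian n μ C) (hν : HasExpMoments ν)
    (hg : Differentiable ℝ g) (hb : ExpBounded g) (hb' : ExpBounded (fderiv ℝ g))
    (a b : ℝ) (i : Fin n) :
    ∫ p, p.2 i * g (a • p.1 + b • p.2) ∂ν.prod μ =
      b * ∑ l, C i l * ∫ p, fderiv ℝ g (a • p.1 + b • p.2) (Pi.single l 1) ∂ν.prod μ := by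
  have := hμ.isProbabilityMeasure
  simp_rw [← integral_prod_swap (μ := ν) (ν := μ)]
  simpa only [Prod.fst_swap, Prod.snd_swap, add_comm] using
    hμ.integral_prod_fst_mul_eq_sum hν hg hb hb' b a i

end IsCenteredGaussian

section Interpolation

variable {E : Type*} [NormedAddCommGroup E] [NormedSpace ℝ E]

noncomputable def interpPath (t : ℝ) (p : E × E) : E := √t • p.1 + √(1 - t) • p.2

@[simp] lemma interpPath_zero (p : E × E) : interpPath 0 p = p.2 := by simp [interpPath]

@[simp] lemma interpPath_one (p : E × E) : interpPath 1 p = p.1 := by simp [interpPath]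

lemma continuous_interpPath_left (p : E × E) : Continuous fun t : ℝ => interpPath t p := by
  unfold interpPath; fun_prop

lemma continuous_interpPath_right (t : ℝ) : Continuous (interpPath (E := E) t) := by
  unfold interpPath; fun_prop

lemma norm_interpPath_le {t : ℝ} (ht : t ∈ Set.Icc (0 : ℝ) 1) (p : E × E) :
    ‖interpPath t p‖ ≤ 2 * ‖p‖ := by
  have hsqrt : ∀ s : ℝ, s ≤ 1 → ‖√s‖ ≤ 1 := fun s hs => by
    rw [norm_of_nonneg (sqrt_nonneg s)]; exact sqrt_le_one.2 hs
  calc ‖interpPath t p‖ ≤ ‖√t‖ * ‖p.1‖ + ‖√(1 - t)‖ * ‖p.2‖ :=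
        (norm_add_le _ _).trans (by rw [norm_smul, norm_smul])
    _ ≤ 1 * ‖p‖ + 1 * ‖p‖ := by
        gcongr
        exacts [hsqrt t ht.2, norm_fst_le p, hsqrt _ (by linarith [ht.1]), norm_snd_le p]
    _ = 2 * ‖p‖ := by ring

lemma hasDerivAt_interpPath {t : ℝ} (ht : t ∈ Set.Ioo (0 : ℝ) 1) (p : E × E) :
    HasDerivAt (fun s => interpPath s p) ((2 * √t)⁻¹ • p.1 - (2 * √(1 - t))⁻¹ • p.2) t := by
  have h1 : HasDerivAt (fun s => √(1 - s)) (-(2 * √(1 - t))⁻¹) t := by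
    simpa [neg_div, one_div] using ((hasDerivAt_id t).const_sub 1).sqrt (sub_pos.2 ht.2).ne'
  have h0 : HasDerivAt (fun s => √s) (2 * √t)⁻¹ t := by
    simpa [one_div] using hasDerivAt_sqrt ht.1.ne'
  exact ((h0.smul_const p.1).add (h1.smul_const p.2)).congr_deriv (by simp [sub_eq_add_neg])

lemma norm_deriv_interpPath_le {t s : ℝ} (ht : t ∈ Set.Ioo (0 : ℝ) 1)
    (hs : s ∈ Set.Ioo (t / 2) ((1 + t) / 2)) (p : E × E) :
    ‖(2 * √s)⁻¹ • p.1 - (2 * √(1 - s))⁻¹ • p.2‖ ≤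
      ((2 * √(t / 2))⁻¹ + (2 * √((1 - t) / 2))⁻¹) * ‖p‖ := by
  obtain ⟨ht0, ht1⟩ := ht
  obtain ⟨hs0, hs1⟩ := hs
  have h0 : 0 < t / 2 := by linarith
  have h1 : 0 < (1 - t) / 2 := by linarith
  calc ‖(2 * √s)⁻¹ • p.1 - (2 * √(1 - s))⁻¹ • p.2‖
      ≤ (2 * √s)⁻¹ * ‖p.1‖ + (2 * √(1 - s))⁻¹ * ‖p.2‖ := (norm_sub_le _ _).trans <| by
        rw [norm_smul, norm_smul, norm_of_nonneg (by positivity), norm_of_nonneg (by positivity)]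
    _ ≤ (2 * √(t / 2))⁻¹ * ‖p‖ + (2 * √((1 - t) / 2))⁻¹ * ‖p‖ := by
        gcongr
        all_goals first | exact norm_fst_le p | exact norm_snd_le p | linarith
    _ = ((2 * √(t / 2))⁻¹ + (2 * √((1 - t) / 2))⁻¹) * ‖p‖ := by ring

variable [MeasurableSpace E] [BorelSpace E] [SecondCountableTopology E]
  {ν : Measure (E × E)}

lemma integrable_comp_interpPath (hν : HasExpMoments ν) {g : E → ℝ} (hg : Continuous g)
    (hgb : ExpBounded g) {t : ℝ} (ht : t ∈ Set.Icc (0 : ℝ) 1) :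
    Integrable (fun p => g (interpPath t p)) ν :=
  hν.integrable (hgb.comp _ zero_le_two (norm_interpPath_le ht))
    (hg.comp (continuous_interpPath_right t)).aestronglyMeasurable

lemma integrable_mul_comp_interpPath (hν : HasExpMoments ν) {v : E × E → ℝ} (hv : Continuous v)
    {K : ℝ} (hvp : ∀ p, ‖v p‖ ≤ K * ‖p‖) {g : E → ℝ} (hg : Continuous g) (hgb : ExpBounded g)
    {t : ℝ} (ht : t ∈ Set.Icc (0 : ℝ) 1) : Integrable (fun p => v p * g (interpPath t p)) ν :=
  hν.integrable ((expBounded_norm_le hvp).mul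
    (hgb.comp _ zero_le_two (norm_interpPath_le ht)))
    (hv.mul (hg.comp (continuous_interpPath_right t))).aestronglyMeasurable

lemma continuousOn_integral_comp_interpPath (hν : HasExpMoments ν) {G : Type*}
    [NormedAddCommGroup G] [NormedSpace ℝ G] {g : E → G} (hg : Continuous g)
    (hgb : ExpBounded g) :
    ContinuousOn (fun t => ∫ p, g (interpPath t p) ∂ν) (Set.Icc 0 1) := by
  obtain ⟨a, b, ha, hb, hgb⟩ := hgb
  refine continuousOn_of_dominated (bound := fun p => a * exp ((2 * b) * ‖p‖))
    (fun t _ => (hg.comp (continuous_interpPath_right t)).aestronglyMeasurable)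
    (fun t ht => ae_of_all _ fun p => (hgb _).trans ?_) ((hν _).const_mul a)
    (ae_of_all _ fun p => (hg.comp (continuous_interpPath_left p)).continuousOn)
  refine mul_le_mul_of_nonneg_left (exp_le_exp.2 ?_) ha
  calc b * ‖interpPath t p‖ ≤ b * (2 * ‖p‖) :=
        mul_le_mul_of_nonneg_left (norm_interpPath_le ht p) hb
    _ = 2 * b * ‖p‖ := by ring

lemma hasDerivAt_integral_comp_interpPath (hν : HasExpMoments ν) {f : E → ℝ}
    (hf : ContDiff ℝ 1 f) (hfb : ExpBounded f) (hf' : ExpBounded (fderiv ℝ f)) {t : ℝ}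
    (ht : t ∈ Set.Ioo (0 : ℝ) 1) :
    HasDerivAt (fun s => ∫ p, f (interpPath s p) ∂ν)
      (∫ p, fderiv ℝ f (interpPath t p) ((2 * √t)⁻¹ • p.1 - (2 * √(1 - t))⁻¹ • p.2) ∂ν) t := by
  obtain ⟨a, b, ha, hb, hf'b⟩ := hf'
  set U := Set.Ioo (t / 2) ((1 + t) / 2)
  set c := (2 * √(t / 2))⁻¹ + (2 * √((1 - t) / 2))⁻¹
  have hU : ∀ s ∈ U, s ∈ Set.Ioo (0 : ℝ) 1 := fun s hs =>
    ⟨by linarith [hs.1, ht.1], by linarith [hs.2, ht.2]⟩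
  have hbound : ∀ p : E × E, ∀ s ∈ U,
      ‖fderiv ℝ f (interpPath s p) ((2 * √s)⁻¹ • p.1 - (2 * √(1 - s))⁻¹ • p.2)‖ ≤
        a * c * (‖p‖ * exp ((2 * b) * ‖p‖)) := fun p s hs =>
    calc _ ≤ ‖fderiv ℝ f (interpPath s p)‖ * (c * ‖p‖) :=
          ((fderiv ℝ f _).le_opNorm _).trans
            (mul_le_mul_of_nonneg_left (norm_deriv_interpPath_le ht hs p) (norm_nonneg _))
      _ ≤ a * exp ((2 * b) * ‖p‖) * (c * ‖p‖) := by
          refine mul_le_mul_of_nonneg_right ((hf'b _).trans ?_) (by positivity)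
          refine mul_le_mul_of_nonneg_left (exp_le_exp.2 ?_) ha
          nlinarith [norm_interpPath_le (Set.Ioo_subset_Icc_self (hU s hs)) p]
      _ = a * c * (‖p‖ * exp ((2 * b) * ‖p‖)) := by ring
  have hbound_int : Integrable (fun p : E × E => a * c * (‖p‖ * exp ((2 * b) * ‖p‖))) ν :=
    (hν.integrable ((expBounded_norm_le (g := fun p : E × E => ‖p‖) (C := 1) fun p => by simp).mul
      (expBounded_exp_mul_norm _)) (by fun_prop)).const_mul _
  exact (hasDerivAt_integral_of_dominated_loc_of_deriv_le (Ioo_mem_nhds (by linarith [ht.1])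
      (by linarith [ht.2]))
    (Eventually.of_forall fun s =>
      (hf.continuous.comp (continuous_interpPath_right s)).aestronglyMeasurable)
    (integrable_comp_interpPath hν hf.continuous hfb (Set.Ioo_subset_Icc_self ht))
    (((hf.continuous_fderiv one_ne_zero).comp (continuous_interpPath_right t)).clm_apply
      (by fun_prop)).aestronglyMeasurable
    (ae_of_all _ hbound) hbound_int
    (ae_of_all _ fun p s hs => (hf.differentiable one_ne_zero _).hasFDerivAt.comp_hasDerivAt s
      (hasDerivAt_interpPath (hU s hs) p))).2

end Interpolation

lemma inv_two_mul_sqrt_mul_sqrt {s : ℝ} (hs : 0 < s) : (2 * √s)⁻¹ * √s = 1 / 2 := by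
  have := sqrt_pos.2 hs
  field_simp

theorem integral_mul_comp_interpPath_eq {n : ℕ} {μX μY : Measure (Fin n → ℝ)}
    {CX CY : Matrix (Fin n) (Fin n) ℝ} (hX : IsCenteredGaussian n μX CX)
    (hY : IsCenteredGaussian n μY CY) {g : (Fin n → ℝ) → ℝ} (hg : Differentiable ℝ g)
    (hb : ExpBounded g) (hb' : ExpBounded (fderiv ℝ g)) {t : ℝ} (ht : t ∈ Set.Ioo (0 : ℝ) 1)
    (i : Fin n) :
    ∫ p, ((2 * √t)⁻¹ • p.1 - (2 * √(1 - t))⁻¹ • p.2) i * g (interpPath t p) ∂μX.prod μY =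
      1 / 2 * ∑ l, (CX i l - CY i l) *
        ∫ p, fderiv ℝ g (interpPath t p) (Pi.single l 1) ∂μX.prod μY := by
  have := hX.isProbabilityMeasure
  have := hY.isProbabilityMeasure
  have hν := hX.hasExpMoments.prod hY.hasExpMoments
  have ht' := Set.Ioo_subset_Icc_self ht
  have hX_int := integrable_mul_comp_interpPath hν (v := fun p => p.1 i) (K := 1) (by fun_prop)
    (fun p => (one_mul ‖p‖).symm ▸ (norm_le_pi_norm p.1 i).trans (norm_fst_le p))
    hg.continuous hb ht'
  have hY_int := integrable_mul_comp_interpPath hν (v := fun p => p.2 i) (K := 1) (by fun_prop)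
    (fun p => (one_mul ‖p‖).symm ▸ (norm_le_pi_norm p.2 i).trans (norm_snd_le p))
    hg.continuous hb ht'
  have hXpart : ∫ p, p.1 i * g (interpPath t p) ∂μX.prod μY =
      √t * ∑ l, CX i l * ∫ p, fderiv ℝ g (interpPath t p) (Pi.single l 1) ∂μX.prod μY :=
    hX.integral_prod_fst_mul_eq_sum hY.hasExpMoments hg hb hb' _ _ i
  have hYpart : ∫ p, p.2 i * g (interpPath t p) ∂μX.prod μY =
      √(1 - t) * ∑ l, CY i l * ∫ p, fderiv ℝ g (interpPath t p) (Pi.single l 1) ∂μX.prod μY :=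
    hY.integral_prod_snd_mul_eq_sum hX.hasExpMoments hg hb hb' _ _ i
  simp only [Pi.sub_apply, Pi.smul_apply, smul_eq_mul, sub_mul, mul_assoc]
  rw [integral_sub (hX_int.const_mul _) (hY_int.const_mul _), integral_const_mul,
    integral_const_mul, hXpart, hYpart, ← mul_assoc, ← mul_assoc,
    inv_two_mul_sqrt_mul_sqrt ht.1, inv_two_mul_sqrt_mul_sqrt (sub_pos.2 ht.2), ← mul_sub,
    ← Finset.sum_sub_distrib]

section Hessian

variable {n : ℕ} {f : (Fin n → ℝ) → ℝ}

lemma contDiff_fderiv_apply_single (hf : ContDiff ℝ 2 f) (i : Fin n) :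
    ContDiff ℝ 1 fun y => fderiv ℝ f y (Pi.single i 1) :=
  (hf.fderiv_right (by norm_num)).clm_apply contDiff_const

lemma continuous_hessianMatrix_apply (hf : ContDiff ℝ 2 f) (i j : Fin n) :
    Continuous fun x => hessianMatrix n f x i j :=
  ((contDiff_fderiv_apply_single hf j).continuous_fderiv one_ne_zero).clm_apply continuous_const

lemma trace_mul_hessianMatrix (D : Matrix (Fin n) (Fin n) ℝ) (x : Fin n → ℝ) :
    (D * hessianMatrix n f x).trace = ∑ i, ∑ l, D i l * hessianMatrix n f x l i := by
  simp [Matrix.trace, Matrix.mul_apply]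

lemma continuous_trace_mul_hessianMatrix (hf : ContDiff ℝ 2 f) (D : Matrix (Fin n) (Fin n) ℝ) :
    Continuous fun x => (D * hessianMatrix n f x).trace := by
  simp_rw [trace_mul_hessianMatrix]
  exact continuous_finsetSum _ fun i _ => continuous_finsetSum _ fun l _ =>
    continuous_const.mul (continuous_hessianMatrix_apply hf l i)

lemma expBounded_trace_mul_hessianMatrix (hf2 : ∀ i j, ExpBounded fun x => hessianMatrix n f x i j)
    (D : Matrix (Fin n) (Fin n) ℝ) : ExpBounded fun x => (D * hessianMatrix n f x).trace := by
  simp_rw [trace_mul_hessianMatrix]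
  exact ExpBounded.sum _ fun i _ => ExpBounded.sum _ fun l _ =>
    (hf2 l i).of_norm_le (c := ‖D i l‖) fun x => (norm_mul _ _).le

theorem integral_fderiv_interpPath_eq {μX μY : Measure (Fin n → ℝ)}
    {CX CY : Matrix (Fin n) (Fin n) ℝ} (hX : IsCenteredGaussian n μX CX)
    (hY : IsCenteredGaussian n μY CY) (hf : ContDiff ℝ 2 f)
    (hf1 : ∀ i, ExpBounded (fun x => fderiv ℝ f x (Pi.single i 1)))
    (hf2 : ∀ i j, ExpBounded (fun x => hessianMatrix n f x i j)) {t : ℝ}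
    (ht : t ∈ Set.Ioo (0 : ℝ) 1) :
    ∫ p, fderiv ℝ f (interpPath t p) ((2 * √t)⁻¹ • p.1 - (2 * √(1 - t))⁻¹ • p.2) ∂μX.prod μY =
      -(1 / 2) * ∫ p, ((CY - CX) * hessianMatrix n f (interpPath t p)).trace ∂μX.prod μY := by
  have := hX.isProbabilityMeasure
  have := hY.isProbabilityMeasure
  have hν := hX.hasExpMoments.prod hY.hasExpMoments
  have ht' := Set.Ioo_subset_Icc_self ht
  have hpartial : ∀ i, Integrable (fun p : (Fin n → ℝ) × (Fin n → ℝ) =>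
      ((2 * √t)⁻¹ • p.1 - (2 * √(1 - t))⁻¹ • p.2) i * fderiv ℝ f (interpPath t p) (Pi.single i 1))
      (μX.prod μY) := fun i =>
    integrable_mul_comp_interpPath hν (by fun_prop) (fun p => (norm_le_pi_norm _ i).trans
      (norm_deriv_interpPath_le ht ⟨by linarith [ht.1], by linarith [ht.2]⟩ p))
      (contDiff_fderiv_apply_single hf i).continuous (hf1 i) ht'
  have hH : ∀ l i, Integrable (fun p => hessianMatrix n f (interpPath t p) l i) (μX.prod μY) :=
    fun l i => integrable_comp_interpPath hν (continuous_hessianMatrix_apply hf l i) (hf2 l i) ht'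
  have hexpand : ∀ p : (Fin n → ℝ) × (Fin n → ℝ),
      fderiv ℝ f (interpPath t p) ((2 * √t)⁻¹ • p.1 - (2 * √(1 - t))⁻¹ • p.2) =
        ∑ i, ((2 * √t)⁻¹ • p.1 - (2 * √(1 - t))⁻¹ • p.2) i *
          fderiv ℝ f (interpPath t p) (Pi.single i 1) := fun p =>
    ContinuousLinearMap.apply_eq_sum_mul_apply_single _ _
  simp_rw [hexpand, trace_mul_hessianMatrix, Matrix.sub_apply]
  rw [integral_finsetSum _ fun i _ => hpartial i,
    integral_finsetSum _ fun i _ => integrable_finsetSum _ fun l _ => (hH l i).const_mul _,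
    Finset.mul_sum]
  refine Finset.sum_congr rfl fun i _ => ?_
  rw [integral_mul_comp_interpPath_eq hX hY
      ((contDiff_fderiv_apply_single hf i).differentiable one_ne_zero) (hf1 i)
      (expBounded_fderiv_of_apply_single fun l => hf2 l i) ht i,
    integral_finsetSum _ fun l _ => (hH l i).const_mul _, Finset.mul_sum, Finset.mul_sum]
  refine Finset.sum_congr rfl fun l _ => ?_
  rw [integral_const_mul]
  simp only [hessianMatrix, Matrix.of_apply]
  ring

end Hessian

-- The norm on `Fin n → ℝ` is the sup norm, so the Euclidean length is at most `√n ‖x‖`.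
lemma expBounded_of_le_exp_sqrt {n : ℕ} {g : (Fin n → ℝ) → ℝ} {lam : ℝ} (hlam : 0 ≤ lam)
    (h : ∀ x, |g x| ≤ exp (lam * (1 + √(∑ m, x m ^ 2)))) : ExpBounded g := by
  refine ⟨exp lam, lam * √n, (exp_pos _).le, by positivity, fun x => (h x).trans ?_⟩
  rw [← exp_add]
  refine exp_le_exp.2 ?_
  have hsum : ∑ m, x m ^ 2 ≤ n * ‖x‖ ^ 2 := by
    calc ∑ m, x m ^ 2 ≤ ∑ _m : Fin n, ‖x‖ ^ 2 := Finset.sum_le_sum fun m _ => by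
          rw [← sq_abs, ← Real.norm_eq_abs]
          exact pow_le_pow_left₀ (norm_nonneg _) (norm_le_pi_norm x m) 2
      _ = n * ‖x‖ ^ 2 := by simp
  have hsqrt : √(∑ m, x m ^ 2) ≤ √n * ‖x‖ := by
    rw [← sqrt_sq (norm_nonneg x), ← sqrt_mul (Nat.cast_nonneg n)]
    exact sqrt_le_sqrt hsum
  nlinarith
/-- **Interpolation method.** For `X, Y` independent centered Gaussian vectors with
covariances `C^X, C^Y` and `f` a `C²` function whose value and first and second
partial derivatives are bounded by `exp (λ (1 + |x|))`,
`E[f(Y)] − E[f(X)] = ½ ∫₀¹ E[Tr((C^Y − C^X) ∇²f(√t X + √(1−t) Y))] dt`. -/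
theorem interpolation_method (n : ℕ) (μX μY : Measure (Fin n → ℝ))
    (CX CY : Matrix (Fin n) (Fin n) ℝ)
    (hX : IsCenteredGaussian n μX CX) (hY : IsCenteredGaussian n μY CY)
    (f : (Fin n → ℝ) → ℝ) (hf : ContDiff ℝ 2 f)
    (lam : ℝ) (hlam : 0 ≤ lam)
    (hbound : ∀ x : Fin n → ℝ,
      |f x| ≤ Real.exp (lam * (1 + Real.sqrt (∑ m, (x m) ^ 2))) ∧
      (∀ i, |fderiv ℝ f x (Pi.single i 1)| ≤
        Real.exp (lam * (1 + Real.sqrt (∑ m, (x m) ^ 2)))) ∧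
      (∀ i j, |hessianMatrix n f x i j| ≤
        Real.exp (lam * (1 + Real.sqrt (∑ m, (x m) ^ 2))))) :
    (∫ y, f y ∂μY) - (∫ x, f x ∂μX)
      = (1 / 2) * ∫ t in (0:ℝ)..1,
          ∫ p : (Fin n → ℝ) × (Fin n → ℝ),
            Matrix.trace ((CY - CX) *
              hessianMatrix n f
                (fun m => Real.sqrt t * p.1 m + Real.sqrt (1 - t) * p.2 m))
            ∂(μX.prod μY) := by
  have hf0 := expBounded_of_le_exp_sqrt hlam fun x => (hbound x).1
  have hf1 := fun i => expBounded_of_le_exp_sqrt hlam fun x => (hbound x).2.1 i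
  have hf2 := fun i j => expBounded_of_le_exp_sqrt hlam fun x => (hbound x).2.2 i j
  have := hX.isProbabilityMeasure
  have := hY.isProbabilityMeasure
  have hν := hX.hasExpMoments.prod hY.hasExpMoments
  have hG := continuousOn_integral_comp_interpPath hν
    (continuous_trace_mul_hessianMatrix hf (CY - CX)) (expBounded_trace_mul_hessianMatrix hf2 _)
  have hFTC := intervalIntegral.integral_eq_sub_of_hasDerivAt_of_le zero_le_one
    (continuousOn_integral_comp_interpPath hν hf.continuous hf0)
    (fun t ht => (hasDerivAt_integral_comp_interpPath hν (hf.of_le one_le_two) hf0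
      (expBounded_fderiv_of_apply_single hf1) ht).congr_deriv
        (integral_fderiv_interpPath_eq hX hY hf hf1 hf2 ht))
    ((continuousOn_const.mul hG).intervalIntegrable_of_Icc zero_le_one)
  simp only [intervalIntegral.integral_const_mul, interpPath_zero, interpPath_one,
    integral_fun_fst, integral_fun_snd, probReal_univ, one_smul] at hFTC
  change _ = 1 / 2 * ∫ t in (0 : ℝ)..1, ∫ p, ((CY - CX) * hessianMatrix n f (interpPath t p)).trace
    ∂μX.prod μY
  linarith
end

section
/- Let D be an n×n real symmetric matrix and define G: Iⁿ → ℝ by G(μ) = Σ_{i=1}ⁿ μ_i D_{ii} − Σ_{i=1}ⁿ Σ_{j=1}ⁿ μ_i μ_j D_{ij}, where Iⁿ = {μ ∈ ℝⁿ : μ_i ≥ 0 for all i, Σ_{i=1}ⁿ μ_i = 1} is the standard simplex. Then inf_{μ ∈ Iⁿ} G(μ) ≥ 0 if and only if D_{ii} + D_{jj} − 2D_{ij} ≥ 0 for all i, j ∈ {1,…,n}. -/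
/-!
Using `∑ μ = 1`, `2 G(μ) = ∑ᵢ ∑ⱼ μᵢ μⱼ (Dᵢᵢ + Dⱼⱼ − 2Dᵢⱼ)`, which is nonnegative on the simplex
when every `Dᵢᵢ + Dⱼⱼ − 2Dᵢⱼ` is. Conversely, for symmetric `D` the value of `G` at the midpoint
of the vertices `eᵢ, eⱼ` is `(Dᵢᵢ + Dⱼⱼ − 2Dᵢⱼ) / 4`, and it bounds the infimum from above because
`G` is bounded below on the compact simplex.
-/

open Finset

variable {ι : Type*} [Fintype ι]

def simplexGap {R : Type*} [CommRing R] (D : Matrix ι ι R) (μ : ι → R) : R :=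
  (∑ i, μ i * D i i) - ∑ i, ∑ j, μ i * μ j * D i j

theorem two_mul_simplexGap {R : Type*} [CommRing R] (D : Matrix ι ι R) {μ : ι → R}
    (hμ : ∑ i, μ i = 1) :
    2 * simplexGap D μ = ∑ i, ∑ j, μ i * μ j * (D i i + D j j - 2 * D i j) := by
  have hrow : ∀ i, ∑ j, μ i * μ j * D i i = μ i * D i i := fun i => by
    rw [← sum_mul, ← mul_sum, hμ, mul_one]
  have hcol : ∑ i, ∑ j, μ i * μ j * D j j = ∑ j, μ j * D j j := by
    rw [sum_comm]
    refine sum_congr rfl fun j _ => ?_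
    rw [← sum_mul, ← sum_mul, hμ, one_mul]
  simp only [mul_sub, mul_add, sum_sub_distrib, sum_add_distrib, hrow, hcol, simplexGap]
  simp only [mul_left_comm _ (2 : R), ← mul_sum]
  ring

theorem simplexGap_nonneg {D : Matrix ι ι ℝ} (hD : ∀ i j, 0 ≤ D i i + D j j - 2 * D i j)
    {μ : ι → ℝ} (hμ : μ ∈ stdSimplex ℝ ι) : 0 ≤ simplexGap D μ := by
  have hsum : 0 ≤ 2 * simplexGap D μ := by
    rw [two_mul_simplexGap D hμ.2]
    exact sum_nonneg fun i _ => sum_nonneg fun j _ =>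
      mul_nonneg (mul_nonneg (hμ.1 i) (hμ.1 j)) (hD i j)
  linarith

theorem midpoint_mem_stdSimplex [DecidableEq ι] (i j : ι) :
    (1 / 2 : ℝ) • (Pi.single i 1 + Pi.single j 1 : ι → ℝ) ∈ stdSimplex ℝ ι := by
  rw [smul_add]
  exact convex_stdSimplex ℝ ι (single_mem_stdSimplex ℝ i) (single_mem_stdSimplex ℝ j)
    (by norm_num) (by norm_num) (by norm_num)

theorem simplexGap_midpoint [DecidableEq ι] {D : Matrix ι ι ℝ} (hD : D.IsSymm) (i j : ι) :
    simplexGap D ((1 / 2 : ℝ) • (Pi.single i 1 + Pi.single j 1))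
      = (D i i + D j j - 2 * D i j) / 4 := by
  have hji : D j i = D i j := hD.apply i j
  simp only [simplexGap, Pi.smul_apply, Pi.add_apply, Pi.single_apply, smul_eq_mul, mul_add,
    add_mul, mul_ite, ite_mul, mul_one, mul_zero, zero_mul, sum_add_distrib, sum_ite_eq',
    mem_univ, if_true]
  rw [hji]
  ring

/-- For a symmetric matrix `D`, the function
`G(μ) = Σᵢ μᵢ Dᵢᵢ − Σᵢⱼ μᵢ μⱼ Dᵢⱼ` on the standard simplex `Iⁿ` satisfies
`inf_{μ ∈ Iⁿ} G(μ) ≥ 0` iff `Dᵢᵢ + Dⱼⱼ − 2Dᵢⱼ ≥ 0` for all `i, j`. -/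
theorem simplex_inf_nonneg_iff (n : ℕ) (D : Matrix (Fin n) (Fin n) ℝ)
    (hD : D.IsSymm) :
    0 ≤ sInf ((fun μ : Fin n → ℝ =>
          (∑ i, μ i * D i i) - ∑ i, ∑ j, μ i * μ j * D i j) ''
        {μ : Fin n → ℝ | (∀ i, 0 ≤ μ i) ∧ ∑ i, μ i = 1})
      ↔ ∀ i j, 0 ≤ D i i + D j j - 2 * D i j := by
  change 0 ≤ sInf (simplexGap D '' stdSimplex ℝ (Fin n)) ↔ _
  refine ⟨fun h i j => ?_, fun h => Real.sInf_nonneg ?_⟩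
  · have hbdd : BddBelow (simplexGap D '' stdSimplex ℝ (Fin n)) :=
      ((isCompact_stdSimplex ℝ (Fin n)).image (by unfold simplexGap; fun_prop)).bddBelow
    have hle := csInf_le hbdd (Set.mem_image_of_mem _ (midpoint_mem_stdSimplex i j))
    rw [simplexGap_midpoint hD] at hle
    linarith
  · rintro _ ⟨μ, hμ, rfl⟩
    exact simplexGap_nonneg h hμ
end

section
/- Let (γ_i)_{i≥1} be a sequence of strictly positive reals with Σ_{i=1}^∞ γ_i = 1, and for each natural number M set k_i(M) = ⌊M γ_i⌋ and |k(M)| = Σ_{i=1}^∞ k_i(M). Then lim_{N→∞} max_{N₁+N₂=N, N₁,N₂≥1} ( |k(N)| − |k(N₁)| − |k(N₂)| ) / |k(N)| = 0 (the quantity in the numerator is nonnegative, and |k(N)| > 0 for all large N). -/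
/-- `|k(M)| = Σᵢ ⌊M γᵢ⌋` (as a real number; only finitely many terms are nonzero). -/
noncomputable def floorTotal (γ : ℕ → ℝ) (M : ℕ) : ℝ :=
  ∑' i, (⌊(M : ℝ) * γ i⌋₊ : ℝ)

/-!
Superadditivity of `⌊·⌋₊` makes the defect `|k(N)| − |k(N₁)| − |k(N₂)|` nonnegative, and termwise
it is at most `min 1 (N γᵢ)`, so the defect is `o(N)`: `Σᵢ min (1/N) γᵢ → 0` by dominated
convergence with dominating sequence `γ`. By the same argument `|k(N)| / N → Σᵢ γᵢ = 1`, so every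
ratio in the supremum lies between `0` and `(Σᵢ min 1 (N γᵢ)) / |k(N)| → 0`.
-/

open Filter Topology

section FloorArithmetic

variable {a b : ℝ}

lemma Nat.floor_add_floor_le_floor_add (ha : 0 ≤ a) (hb : 0 ≤ b) :
    ⌊a⌋₊ + ⌊b⌋₊ ≤ ⌊a + b⌋₊ :=
  Nat.le_floor <| by
    rw [Nat.cast_add]
    exact _root_.add_le_add (Nat.floor_le ha) (Nat.floor_le hb)

lemma Nat.floor_add_le_floor_add_floor_add_one (ha : 0 ≤ a) (hb : 0 ≤ b) :
    ⌊a + b⌋₊ ≤ ⌊a⌋₊ + ⌊b⌋₊ + 1 := by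
  rw [← Nat.lt_add_one_iff, Nat.floor_lt (add_nonneg ha hb)]
  push_cast
  linarith [Nat.lt_floor_add_one a, Nat.lt_floor_add_one b]

lemma natFloor_add_le_add_min_one (ha : 0 ≤ a) (hb : 0 ≤ b) :
    (⌊a + b⌋₊ : ℝ) ≤ ⌊a⌋₊ + ⌊b⌋₊ + min 1 (a + b) := by
  rcases le_or_gt 1 (a + b) with hab | hab
  · rw [min_eq_left hab]
    exact_mod_cast Nat.floor_add_le_floor_add_floor_add_one ha hb
  · rw [Nat.floor_eq_zero.2 hab, Nat.cast_zero]
    have : 0 ≤ min 1 (a + b) := le_min zero_le_one (add_nonneg ha hb)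
    positivity

end FloorArithmetic

section FloorTotal

variable {γ : ℕ → ℝ} (hγ : ∀ i, 0 ≤ γ i) (hsum : Summable γ)
include hγ hsum

lemma summable_natFloor_mul (M : ℕ) : Summable fun i => (⌊(M : ℝ) * γ i⌋₊ : ℝ) :=
  (hsum.mul_left (M : ℝ)).of_nonneg_of_le (fun _ => Nat.cast_nonneg _)
    fun i => Nat.floor_le (mul_nonneg M.cast_nonneg (hγ i))

lemma summable_min_one_mul (M : ℕ) : Summable fun i => min 1 ((M : ℝ) * γ i) :=
  (hsum.mul_left (M : ℝ)).of_nonneg_of_le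
    (fun i => le_min zero_le_one (mul_nonneg M.cast_nonneg (hγ i))) fun _ => min_le_right _ _

lemma floorTotal_add_floorTotal_le (N₁ N₂ : ℕ) : floorTotal γ N₁ + floorTotal γ N₂ ≤ floorTotal γ (N₁ + N₂) := by
  rw [floorTotal, floorTotal, floorTotal, ← (summable_natFloor_mul hγ hsum N₁).tsum_add
    (summable_natFloor_mul hγ hsum N₂)]
  refine ((summable_natFloor_mul hγ hsum N₁).add (summable_natFloor_mul hγ hsum N₂)).tsum_le_tsum
    (fun i => ?_) (summable_natFloor_mul hγ hsum _)
  rw [Nat.cast_add, add_mul]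
  exact_mod_cast Nat.floor_add_floor_le_floor_add
    (mul_nonneg N₁.cast_nonneg (hγ i)) (mul_nonneg N₂.cast_nonneg (hγ i))

lemma floorTotal_add_le (N₁ N₂ : ℕ) :
    floorTotal γ (N₁ + N₂) ≤
      floorTotal γ N₁ + floorTotal γ N₂ + ∑' i, min 1 (((N₁ + N₂ : ℕ) : ℝ) * γ i) := by
  have h₁ := summable_natFloor_mul hγ hsum N₁
  have h₂ := summable_natFloor_mul hγ hsum N₂
  rw [floorTotal, floorTotal, floorTotal, ← h₁.tsum_add h₂,
    ← (h₁.add h₂).tsum_add (summable_min_one_mul hγ hsum _)]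
  refine (summable_natFloor_mul hγ hsum _).tsum_le_tsum (fun i => ?_)
    ((h₁.add h₂).add (summable_min_one_mul hγ hsum _))
  simpa only [Nat.cast_add, add_mul] using natFloor_add_le_add_min_one
    (mul_nonneg N₁.cast_nonneg (hγ i)) (mul_nonneg N₂.cast_nonneg (hγ i))

lemma tendsto_floorTotal_div_natCast :
    Tendsto (fun N : ℕ => floorTotal γ N / N) atTop (𝓝 (∑' i, γ i)) := by
  simp only [floorTotal, ← tsum_div_const]
  have h_nonneg (N i : ℕ) : 0 ≤ (⌊(N : ℝ) * γ i⌋₊ : ℝ) / N := by positivity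
  have h_le (N i : ℕ) : (⌊(N : ℝ) * γ i⌋₊ : ℝ) / N ≤ γ i :=
    div_le_of_le_mul₀ N.cast_nonneg (hγ i)
      ((Nat.floor_le (mul_nonneg N.cast_nonneg (hγ i))).trans_eq (mul_comm _ _))
  refine tendsto_tsum_of_dominated_convergence hsum (fun i => ?_)
    (Eventually.of_forall fun N i => (Real.norm_of_nonneg (h_nonneg N i)).trans_le (h_le N i))
  refine tendsto_of_tendsto_of_tendsto_of_le_of_le' (g := fun N : ℕ => γ i - 1 / N)
    (by simpa using tendsto_const_nhds.sub (tendsto_one_div_atTop_nhds_zero_nat (𝕜 := ℝ)))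
    tendsto_const_nhds ?_ (Eventually.of_forall fun N => h_le N i)
  filter_upwards [eventually_gt_atTop 0] with N hN
  have hN' : (0 : ℝ) < N := Nat.cast_pos.2 hN
  rw [sub_div' hN'.ne', le_div_iff₀ hN', div_mul_cancel₀ _ hN'.ne', mul_comm]
  exact (Nat.sub_one_lt_floor _).le

lemma tendsto_tsum_min_one_mul_div_natCast :
    Tendsto (fun N : ℕ => (∑' i, min 1 ((N : ℝ) * γ i)) / N) atTop (𝓝 0) := by
  simp only [← tsum_div_const]
  have h_nonneg (N i : ℕ) : 0 ≤ min 1 ((N : ℝ) * γ i) / N :=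
    div_nonneg (le_min zero_le_one (mul_nonneg N.cast_nonneg (hγ i))) N.cast_nonneg
  rw [← tsum_zero]
  refine tendsto_tsum_of_dominated_convergence hsum (fun i => ?_) (Eventually.of_forall ?_)
  · refine squeeze_zero (fun N => h_nonneg N i) (fun N => ?_) tendsto_one_div_atTop_nhds_zero_nat
    gcongr
    exact min_le_left _ _
  · exact fun N i => (Real.norm_of_nonneg (h_nonneg N i)).trans_le
      (div_le_of_le_mul₀ N.cast_nonneg (hγ i) ((min_le_right _ _).trans_eq (mul_comm _ _)))

end FloorTotal

/-- If `γᵢ > 0` and `Σᵢ γᵢ = 1`, then with `|k(M)| = Σᵢ ⌊M γᵢ⌋`: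
the quantity `|k(N)| − |k(N₁)| − |k(N₂)|` is nonnegative for every decomposition
`N = N₁ + N₂` with `N₁, N₂ ≥ 1`, `|k(N)| > 0` for all large `N`, and
`max_{N₁+N₂=N, N₁,N₂≥1} (|k(N)| − |k(N₁)| − |k(N₂)|)/|k(N)| → 0` as `N → ∞`. -/
theorem floor_total_defect_limit (γ : ℕ → ℝ) (hγ : ∀ i, 0 < γ i)
    (hsum : Summable γ) (h1 : ∑' i, γ i = 1) :
    (∀ N₁ N₂ : ℕ, 1 ≤ N₁ → 1 ≤ N₂ →
        0 ≤ floorTotal γ (N₁ + N₂) - floorTotal γ N₁ - floorTotal γ N₂) ∧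
    (∀ᶠ N : ℕ in Filter.atTop, 0 < floorTotal γ N) ∧
    Filter.Tendsto (fun N : ℕ =>
        sSup {r : ℝ | ∃ N₁ N₂ : ℕ, 1 ≤ N₁ ∧ 1 ≤ N₂ ∧ N₁ + N₂ = N ∧
          r = (floorTotal γ N - floorTotal γ N₁ - floorTotal γ N₂) / floorTotal γ N})
      Filter.atTop (nhds 0) := by
  have hγ₀ (i : ℕ) : 0 ≤ γ i := (hγ i).le
  have hF_nonneg (N : ℕ) : 0 ≤ floorTotal γ N := tsum_nonneg fun _ => Nat.cast_nonneg _
  have hF_div : Tendsto (fun N : ℕ => floorTotal γ N / N) atTop (𝓝 1) :=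
    h1 ▸ tendsto_floorTotal_div_natCast hγ₀ hsum
  have hF_pos : ∀ᶠ N : ℕ in atTop, 0 < floorTotal γ N := by
    filter_upwards [hF_div.eventually (lt_mem_nhds one_pos)] with N hN
    exact (hF_nonneg N).lt_of_ne fun h => by simp [← h] at hN
  have hD_div_F : Tendsto (fun N : ℕ =>
      (∑' i, min 1 ((N : ℝ) * γ i)) / N / (floorTotal γ N / N)) atTop (𝓝 0) := by
    rw [← zero_div 1]
    exact (tendsto_tsum_min_one_mul_div_natCast hγ₀ hsum).div hF_div one_ne_zero
  refine ⟨fun N₁ N₂ _ _ => ?_, hF_pos, ?_⟩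
  · linarith [floorTotal_add_floorTotal_le hγ₀ hsum N₁ N₂]
  refine squeeze_zero' (Eventually.of_forall fun N => Real.sSup_nonneg ?_) ?_ hD_div_F
  · rintro r ⟨N₁, N₂, -, -, rfl, rfl⟩
    exact div_nonneg (by linarith [floorTotal_add_floorTotal_le hγ₀ hsum N₁ N₂]) (hF_nonneg _)
  filter_upwards [hF_pos, eventually_gt_atTop 0] with N hF hN
  rw [div_div_div_cancel_right₀ (Nat.cast_ne_zero.2 hN.ne')]
  refine Real.sSup_le ?_ (div_nonneg (tsum_nonneg fun i => le_min zero_le_one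
    (mul_nonneg N.cast_nonneg (hγ₀ i))) hF.le)
  rintro r ⟨N₁, N₂, -, -, rfl, rfl⟩
  gcongr
  linarith [floorTotal_add_le hγ₀ hsum N₁ N₂]
end
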